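/- arXiv:2505.10388 — 9 statements merged into one kernel-verified Lean document; each statement's English description precedes it below -/
import Mathlib

section
/- Let α and ξ be real numbers with 1/(2·P_lL) ≤ α ≤ 1/2 + P_lH/(2·P_lL) and 0 ≤ ξ < Δ/(2·P_lL). Define β_l* = (1/α)·(α − 1/2 − (P_hL/Δ)·ξ) and β_h* = (1/α)·(α − 1/2 + (P_lL/Δ)·ξ). Then α·(P_hH·β_h* + P_lH·β_l*) + (1 − α) = 1/2 + ξ and α·(P_hL·β_h* + P_lL·β_l*) + (1 − α) = 1/2, and moreover 0 < β_l* < 1 and 0 < β_h* < 1. -/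
/-- explicit solution of the vote-share equations in the "Flat" Segment 1,
    where all minority agents always vote for A. -/
theorem stmt_0 (PhH PlH PhL PlL α ξ bl bh : ℝ)
    (hPhL : 0 < PhL) (hhh : PhL < PhH) (hHL : PhH ≤ PlL) (hPlL : PlL < 1)
    (hsH : PhH + PlH = 1) (hsL : PhL + PlL = 1)
    (hα₁ : 1 / (2 * PlL) ≤ α) (hα₂ : α ≤ 1 / 2 + PlH / (2 * PlL))
    (hξ₀ : 0 ≤ ξ) (hξ₁ : ξ < (PhH - PhL) / (2 * PlL))
    (hbl : bl = (1 / α) * (α - 1 / 2 - (PhL / (PhH - PhL)) * ξ))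
    (hbh : bh = (1 / α) * (α - 1 / 2 + (PlL / (PhH - PhL)) * ξ)) :
    α * (PhH * bh + PlH * bl) + (1 - α) = 1 / 2 + ξ ∧
    α * (PhL * bh + PlL * bl) + (1 - α) = 1 / 2 ∧
    0 < bl ∧ bl < 1 ∧ 0 < bh ∧ bh < 1 := by
  have hΔ : 0 < PhH - PhL := by linarith
  have hPlL2 : 1 / 2 < PlL := by linarith
  have hα0 : 0 < α := lt_of_lt_of_le (by positivity) hα₁
  have hΔne : PhH - PhL ≠ 0 := ne_of_gt hΔ
  have hαne : α ≠ 0 := ne_of_gt hα0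
  -- key: α - 1/2 ≥ PhL/(2 PlL)
  have hkey : PhL / (2 * PlL) ≤ α - 1 / 2 := by
    rw [div_le_iff₀ (by linarith : (0:ℝ) < 2 * PlL)]
    have h1 : 1 / (2 * PlL) * (2 * PlL) = 1 := by
      field_simp
    nlinarith [mul_le_mul_of_nonneg_right hα₁ (by linarith : (0:ℝ) ≤ 2 * PlL)]
  -- ξ bound: (PhL/Δ) ξ < PhL/(2 PlL)
  have hm : ξ * (2 * PlL) < PhH - PhL := (lt_div_iff₀ (by linarith : (0:ℝ) < 2 * PlL)).mp hξ₁
  have hξb : PhL / (PhH - PhL) * ξ < PhL / (2 * PlL) := by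
    rw [div_mul_eq_mul_div, div_lt_div_iff₀ hΔ (by linarith : (0:ℝ) < 2 * PlL)]
    nlinarith
  have hξc : PlL / (PhH - PhL) * ξ < 1 / 2 := by
    rw [div_mul_eq_mul_div, div_lt_iff₀ hΔ]
    nlinarith
  have hξd : 0 ≤ PlL / (PhH - PhL) * ξ := by positivity
  have hblpos : 0 < bl := by
    rw [hbl]
    have : 0 < α - 1 / 2 - PhL / (PhH - PhL) * ξ := by linarith
    positivity
  have hbhpos : 0 < bh := by
    rw [hbh]
    have h0 : 0 < PhL / (2 * PlL) := by positivity
    have : 0 < α - 1 / 2 + PlL / (PhH - PhL) * ξ := by linarith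
    positivity
  refine ⟨?_, ?_, hblpos, ?_, hbhpos, ?_⟩
  · rw [hbl, hbh]
    have hPlH : PlH = 1 - PhH := by linarith
    have hPlLe : PlL = 1 - PhL := by linarith
    subst hPlH hPlLe
    field_simp
    ring
  · rw [hbl, hbh]
    have hPlH : PlH = 1 - PhH := by linarith
    have hPlLe : PlL = 1 - PhL := by linarith
    subst hPlH hPlLe
    field_simp
    ring
  · rw [hbl, one_div, ← div_eq_inv_mul, div_lt_one hα0]
    have : 0 ≤ PhL / (PhH - PhL) * ξ := by positivity
    linarith
  · rw [hbh, one_div, ← div_eq_inv_mul, div_lt_one hα0]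
    linarith
end

section
/- For all real numbers b_h, b_l ∈ [0, 1]: if P_hH·b_h + P_lH·b_l > P_lL/(P_lL + P_lH), then P_hL·b_h + P_lL·b_l > P_lH/(P_lL + P_lH). -/
/-- key algebraic step of the upper bound proof for Segment 1. -/
theorem stmt_1 (PhH PlH PhL PlL : ℝ)
    (hPhL : 0 < PhL) (hhh : PhL < PhH) (hHL : PhH ≤ PlL) (hPlL : PlL < 1)
    (hsH : PhH + PlH = 1) (hsL : PhL + PlL = 1) :
    ∀ bh bl : ℝ, 0 ≤ bh → bh ≤ 1 → 0 ≤ bl → bl ≤ 1 →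
      PhH * bh + PlH * bl > PlL / (PlL + PlH) →
      PhL * bh + PlL * bl > PlH / (PlL + PlH) := by
  have e1 : PlH = 1 - PhH := by linarith
  have e2 : PlL = 1 - PhL := by linarith
  subst e1 e2
  intro bh bl h0h h1h h0l h1l hyp
  have hS : 0 < (1 - PhL) + (1 - PhH) := by nlinarith
  rw [gt_iff_lt, div_lt_iff₀ hS] at hyp ⊢
  by_contra hg
  push_neg at hg
  have hd : 0 < PhH - PhL := by linarith
  have ht : 0 < (PhH - PhL) * (((1 - PhL) + (1 - PhH)) * (bh - bl) - 1) := by nlinarith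
  have hxy : 1 < ((1 - PhL) + (1 - PhH)) * (bh - bl) := by
    by_contra h; push_neg at h
    nlinarith [mul_nonneg hd.le (by linarith : 0 ≤ 1 - ((1 - PhL) + (1 - PhH)) * (bh - bl))]
  have hy : ((1 - PhL) + (1 - PhH)) * bl ≤ (1 - PhL) - PhH := by
    nlinarith [mul_nonneg hPhL.le (by linarith : 0 ≤ ((1 - PhL) + (1 - PhH)) * (bh - bl) - 1)]
  nlinarith [mul_nonneg (by linarith : (0:ℝ) ≤ 1 - PhH) (by linarith : 0 ≤ (1 - PhL) - PhH - ((1 - PhL) + (1 - PhH)) * bl),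
    mul_nonneg (by linarith : (0:ℝ) ≤ PhH) (mul_nonneg hS.le (by linarith : 0 ≤ 1 - bh))]
end

section
/- Let n ≥ 1 be a natural number and β_h, β_l : {1, …, n} → [0, 1]. Define f_H = (1/n)·Σ_i (P_hH·β_h(i) + P_lH·β_l(i)), f_L = (1/n)·Σ_i (P_hL·β_h(i) + P_lL·β_l(i)), δ_H = (1/n)·Σ_i (P_hH·β_h(i) + P_lH·β_l(i))·(1 − P_hH·β_h(i) − P_lH·β_l(i)), and δ_L = (1/n)·Σ_i (P_hL·β_h(i) + P_lL·β_l(i))·(1 − P_hL·β_h(i) − P_lL·β_l(i)). Then f_H − f_L ≤ 2·Δ·δ_H / min(P_hH, P_lH) and f_H − f_L ≤ 2·Δ·δ_L / min(P_hL, P_lL). -/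
lemma key_pt (P Q a b : ℝ) (hP : 0 < P) (hQ : 0 < Q) (hs : P + Q = 1)
    (ha : 0 ≤ a) (ha1 : a ≤ 1) (hb : 0 ≤ b) (hb1 : b ≤ 1) :
    min P Q * (a - b) ≤ 2 * ((P*a + Q*b) * (1 - P*a - Q*b)) := by
  have hs0 : 0 ≤ P*a + Q*b := by positivity
  have hs1 : P*a + Q*b ≤ 1 := by nlinarith
  rcases le_total a b with h|h
  · have : min P Q * (a - b) ≤ 0 := mul_nonpos_of_nonneg_of_nonpos (le_min hP.le hQ.le) (by linarith)
    nlinarith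
  · rcases le_total P Q with hpq|hpq
    · rw [min_eq_left hpq]
      rcases le_total (P*a+Q*b) (1 - (P*a+Q*b)) with hc|hc
      · nlinarith
      · nlinarith
    · rw [min_eq_right hpq]
      rcases le_total (P*a+Q*b) (1 - (P*a+Q*b)) with hc|hc
      · nlinarith
      · nlinarith

open Finset in
lemma key_sum (P Q D : ℝ) (hP : 0 < P) (hQ : 0 < Q) (hs : P + Q = 1) (hD : 0 < D)
    (n : ℕ) (hn : 1 ≤ n) (βh βl : Fin n → ℝ)
    (hβh : ∀ i, 0 ≤ βh i ∧ βh i ≤ 1) (hβl : ∀ i, 0 ≤ βl i ∧ βl i ≤ 1) :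
    (1 / (n : ℝ)) * ∑ i, D * (βh i - βl i)
      ≤ 2 * D * ((1 / (n : ℝ)) * ∑ i, (P * βh i + Q * βl i) * (1 - P * βh i - Q * βl i))
          / min P Q := by
  have hm : 0 < min P Q := lt_min hP hQ
  rw [le_div_iff₀ hm]
  have hnn : (0:ℝ) ≤ 1 / (n:ℝ) := by positivity
  have hsum : ∑ i, (D * (βh i - βl i) * min P Q)
      ≤ ∑ i, 2 * D * ((P * βh i + Q * βl i) * (1 - P * βh i - Q * βl i)) := by
    apply Finset.sum_le_sum
    intro i _
    obtain ⟨ha, ha1⟩ := hβh i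
    obtain ⟨hb, hb1⟩ := hβl i
    have := mul_le_mul_of_nonneg_left (key_pt P Q (βh i) (βl i) hP hQ hs ha ha1 hb hb1) hD.le
    nlinarith [this]
  have e1 : ∑ i, (D * (βh i - βl i) * min P Q) = (∑ i, D * (βh i - βl i)) * min P Q := by
    rw [Finset.sum_mul]
  have e2 : ∑ i, 2 * D * ((P * βh i + Q * βl i) * (1 - P * βh i - Q * βl i))
      = 2 * D * ∑ i, (P * βh i + Q * βl i) * (1 - P * βh i - Q * βl i) := by
    rw [Finset.mul_sum]
  rw [e1, e2] at hsum
  calc ((1 / (n:ℝ)) * ∑ i, D * (βh i - βl i)) * min P Q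
      = (1 / (n:ℝ)) * ((∑ i, D * (βh i - βl i)) * min P Q) := by ring
    _ ≤ (1 / (n:ℝ)) * (2 * D * ∑ i, (P * βh i + Q * βl i) * (1 - P * βh i - Q * βl i)) :=
        mul_le_mul_of_nonneg_left hsum hnn
    _ = 2 * D * ((1 / (n:ℝ)) * ∑ i, (P * βh i + Q * βl i) * (1 - P * βh i - Q * βl i)) := by ring

open Finset in
/-- Lemma on sub-linear variance: the gap between the expected vote
    shares is controlled by the (normalized) variances in each world state. -/
theorem stmt_2 (PhH PlH PhL PlL : ℝ)
    (hPhL : 0 < PhL) (hhh : PhL < PhH) (hHL : PhH ≤ PlL) (hPlL : PlL < 1)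
    (hsH : PhH + PlH = 1) (hsL : PhL + PlL = 1)
    (n : ℕ) (hn : 1 ≤ n) (βh βl : Fin n → ℝ)
    (hβh : ∀ i, 0 ≤ βh i ∧ βh i ≤ 1) (hβl : ∀ i, 0 ≤ βl i ∧ βl i ≤ 1) :
    (1 / (n : ℝ)) * ∑ i, (PhH * βh i + PlH * βl i)
      - (1 / (n : ℝ)) * ∑ i, (PhL * βh i + PlL * βl i)
      ≤ 2 * (PhH - PhL) *
          ((1 / (n : ℝ)) * ∑ i, (PhH * βh i + PlH * βl i) * (1 - PhH * βh i - PlH * βl i))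
          / min PhH PlH ∧
    (1 / (n : ℝ)) * ∑ i, (PhH * βh i + PlH * βl i)
      - (1 / (n : ℝ)) * ∑ i, (PhL * βh i + PlL * βl i)
      ≤ 2 * (PhH - PhL) *
          ((1 / (n : ℝ)) * ∑ i, (PhL * βh i + PlL * βl i) * (1 - PhL * βh i - PlL * βl i))
          / min PhL PlL := by
  have hPhH : 0 < PhH := lt_trans hPhL hhh
  have hPlH : 0 < PlH := by linarith
  have hPlL' : 0 < PlL := by linarith
  have hD : 0 < PhH - PhL := by linarith
  have egap : (1 / (n : ℝ)) * ∑ i, (PhH * βh i + PlH * βl i)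
      - (1 / (n : ℝ)) * ∑ i, (PhL * βh i + PlL * βl i)
      = (1 / (n : ℝ)) * ∑ i, (PhH - PhL) * (βh i - βl i) := by
    rw [← mul_sub, ← Finset.sum_sub_distrib]
    congr 1
    apply Finset.sum_congr rfl
    intro i _
    linear_combination (βl i) * (hsH - hsL)
  rw [egap]
  exact ⟨key_sum PhH PlH _ hPhH hPlH hsH hD n hn βh βl hβh hβl,
         key_sum PhL PlL _ hPhL hPlL' hsL hD n hn βh βl hβh hβl⟩
end

section
/- Let n ≥ 1 be a natural number, β_h, β_l : {1, …, n} → [0, 1], and let M ⊆ {1, …, n}. Assume that for every i ∉ M one has β_h(i) ≤ β_l(i). Define f_H = (1/n)·Σ_{i=1}^n (P_hH·β_h(i) + P_lH·β_l(i)), f_L = (1/n)·Σ_{i=1}^n (P_hL·β_h(i) + P_lL·β_l(i)), δ_H^M = (1/n)·Σ_{i∈M} (P_hH·β_h(i) + P_lH·β_l(i))·(1 − P_hH·β_h(i) − P_lH·β_l(i)), and δ_L^M = (1/n)·Σ_{i∈M} (P_hL·β_h(i) + P_lL·β_l(i))·(1 − P_hL·β_h(i) − P_lL·β_l(i)). Then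 δ_H^M ≥ (min(P_hH, P_lH)/(2·Δ))·(f_H − f_L) and δ_L^M ≥ (min(P_hL, P_lL)/(2·Δ))·(f_H − f_L). -/
open Finset in
lemma key_pt_s3 (p q : ℝ) (hp : 0 < p) (hq : 0 < q) (hpq : p + q = 1) (a b : ℝ)
    (ha0 : 0 ≤ a) (ha1 : a ≤ 1) (hb0 : 0 ≤ b) (hb1 : b ≤ 1) :
    (min p q / 2) * (a - b) ≤ (p * a + q * b) * (1 - p * a - q * b) := by
  set m := min p q with hm
  have hmp : m ≤ p := min_le_left _ _
  have hmq : m ≤ q := min_le_right _ _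
  have hm0 : 0 < m := lt_min hp hq
  rcases le_or_gt a b with h | h
  · have h1 : 0 ≤ p * a + q * b := by positivity
    have h2 : p * a + q * b ≤ p + q := by nlinarith
    nlinarith [mul_nonneg h1 (by nlinarith : (0:ℝ) ≤ 1 - p * a - q * b)]
  · -- a > b
    have hx1 : m * (a - b) ≤ p * a + q * b := by nlinarith
    have hx2 : m * (a - b) ≤ 1 - p * a - q * b := by
      have hpq1 : p * a + q * b ≤ p + q * b := by nlinarith
      nlinarith
    have hxa : 0 ≤ p * a + q * b := by positivity
    have hxb : 0 ≤ 1 - p * a - q * b := le_trans (by nlinarith) hx2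
    nlinarith [mul_nonneg (by nlinarith : (0:ℝ) ≤ p * a + q * b - m * (a - b)) hxb,
      mul_nonneg (by nlinarith : (0:ℝ) ≤ 1 - p * a - q * b - m * (a - b)) hxa]

open Finset in
lemma half_lem (p q Δ : ℝ) (hp : 0 < p) (hq : 0 < q) (hpq : p + q = 1) (hΔ : 0 < Δ)
    (n : ℕ) (hn : (0:ℝ) < n) (βh βl : Fin n → ℝ)
    (hβh : ∀ i, 0 ≤ βh i ∧ βh i ≤ 1) (hβl : ∀ i, 0 ≤ βl i ∧ βl i ≤ 1)
    (M : Finset (Fin n)) (hmin : ∀ i ∉ M, βh i ≤ βl i) :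
    (min p q / (2 * Δ)) * ((Δ / n) * ∑ i, (βh i - βl i))
      ≤ (1 / (n : ℝ)) * ∑ i ∈ M, (p * βh i + q * βl i) * (1 - p * βh i - q * βl i) := by
  have hm0 : 0 < min p q := lt_min hp hq
  have hS : ∑ i, (βh i - βl i) ≤ ∑ i ∈ M, (βh i - βl i) := by
    rw [← Finset.sum_add_sum_compl M (fun i => βh i - βl i)]
    have : ∑ i ∈ Mᶜ, (βh i - βl i) ≤ 0 := by
      apply Finset.sum_nonpos
      intro i hi
      have := hmin i (Finset.mem_compl.mp hi)
      linarith
    linarith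
  have hvar : (min p q / 2) * ∑ i ∈ M, (βh i - βl i)
      ≤ ∑ i ∈ M, (p * βh i + q * βl i) * (1 - p * βh i - q * βl i) := by
    rw [Finset.mul_sum]
    apply Finset.sum_le_sum
    intro i _
    exact key_pt_s3 p q hp hq hpq (βh i) (βl i) (hβh i).1 (hβh i).2 (hβl i).1 (hβl i).2
  have hrw : (min p q / (2 * Δ)) * ((Δ / n) * ∑ i, (βh i - βl i))
      = (1 / (n : ℝ)) * ((min p q / 2) * ∑ i, (βh i - βl i)) := by
    field_simp
  rw [hrw]
  have h1 : (min p q / 2) * ∑ i, (βh i - βl i)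
      ≤ (min p q / 2) * ∑ i ∈ M, (βh i - βl i) := by
    apply mul_le_mul_of_nonneg_left hS (by positivity)
  have hn' : (0:ℝ) < 1 / n := by positivity
  nlinarith [mul_le_mul_of_nonneg_left (le_trans h1 hvar) (le_of_lt hn')]

open Finset in
/-- Lemma on linear variance of majority agents: when every minority
    agent plays a non-weakly-dominated strategy (βh i ≤ βl i for i ∉ M), the
    normalized variance of the majority agents' vote count bounds the vote-share gap
    from below. -/
theorem stmt_3 (PhH PlH PhL PlL : ℝ)
    (hPhL : 0 < PhL) (hhh : PhL < PhH) (hHL : PhH ≤ PlL) (hPlL : PlL < 1)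
    (hsH : PhH + PlH = 1) (hsL : PhL + PlL = 1)
    (n : ℕ) (hn : 1 ≤ n) (βh βl : Fin n → ℝ)
    (hβh : ∀ i, 0 ≤ βh i ∧ βh i ≤ 1) (hβl : ∀ i, 0 ≤ βl i ∧ βl i ≤ 1)
    (M : Finset (Fin n)) (hmin : ∀ i ∉ M, βh i ≤ βl i) :
    (1 / (n : ℝ)) * ∑ i ∈ M, (PhH * βh i + PlH * βl i) * (1 - PhH * βh i - PlH * βl i)
      ≥ (min PhH PlH / (2 * (PhH - PhL))) *
          ((1 / (n : ℝ)) * ∑ i, (PhH * βh i + PlH * βl i)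
            - (1 / (n : ℝ)) * ∑ i, (PhL * βh i + PlL * βl i)) ∧
    (1 / (n : ℝ)) * ∑ i ∈ M, (PhL * βh i + PlL * βl i) * (1 - PhL * βh i - PlL * βl i)
      ≥ (min PhL PlL / (2 * (PhH - PhL))) *
          ((1 / (n : ℝ)) * ∑ i, (PhH * βh i + PlH * βl i)
            - (1 / (n : ℝ)) * ∑ i, (PhL * βh i + PlL * βl i)) := by
  have hΔ : 0 < PhH - PhL := by linarith
  have hn0 : (0:ℝ) < n := by exact_mod_cast Nat.lt_of_lt_of_le Nat.zero_lt_one hn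
  have hPlH : 0 < PlH := by linarith
  have hPlL0 : 0 < PlL := by linarith
  have hdiff : (1 / (n : ℝ)) * ∑ i, (PhH * βh i + PlH * βl i)
      - (1 / (n : ℝ)) * ∑ i, (PhL * βh i + PlL * βl i)
      = ((PhH - PhL) / n) * ∑ i, (βh i - βl i) := by
    rw [← mul_sub, ← Finset.sum_sub_distrib, Finset.mul_sum, Finset.mul_sum]
    apply Finset.sum_congr rfl
    intro i _
    have h : PlH - PlL = -(PhH - PhL) := by linarith
    linear_combination (n:ℝ)⁻¹ * βl i * h
  rw [hdiff]
  constructor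
  · exact half_lem PhH PlH (PhH - PhL) (by linarith) hPlH hsH hΔ n hn0 βh βl hβh hβl M hmin
  · exact half_lem PhL PlL (PhH - PhL) hPhL hPlL0 hsL hΔ n hn0 βh βl hβh hβl M hmin
end

section
/- Let α ∈ (1/2, 1) and γ ∈ [0, 1 − α]. If 1 − α − γ ≤ (P_hH·P_lL/P_lH)·(α − 1/2) or γ ≤ (P_hH·P_lL/P_hL)·(α − 1/2), then for all β, b ∈ [0, 1] one has min(ξ_h(β, b, γ), ξ_l(β, b, γ)) ≤ Δ·(α − 1/2)/P_hL. -/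
/-- The threshold ξ_h from the paper (β plays the role of β_h^1, b = 1 - β_l^0). -/
noncomputable def xiH (PhH PlH PhL PlL α β b γ : ℝ) : ℝ :=
  (PhH - PhL) * (α - 1 / 2 + (1 - α - γ) * β) /
    (PhH * PlL * β + PlH * PlL * b + PlH)

/-- The threshold ξ_l from the paper. -/
noncomputable def xiL (PhH PlH PhL PlL α β b γ : ℝ) : ℝ :=
  (PhH - PhL) * (α - 1 / 2 + γ * b) /
    (PhH * PhL * β + PhH * PlL * b + PhL)

/-- when γ is biased, min(ξ_h, ξ_l) ≤ Δ(α - 1/2)/P_hL. -/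
theorem stmt_6 (PhH PlH PhL PlL α γ : ℝ)
    (hPhL : 0 < PhL) (hhh : PhL < PhH) (hHL : PhH ≤ PlL) (hPlL : PlL < 1)
    (hsH : PhH + PlH = 1) (hsL : PhL + PlL = 1)
    (hα₁ : 1 / 2 < α) (hα₂ : α < 1)
    (hγ₀ : 0 ≤ γ) (hγ₁ : γ ≤ 1 - α)
    (hbias : 1 - α - γ ≤ (PhH * PlL / PlH) * (α - 1 / 2) ∨
             γ ≤ (PhH * PlL / PhL) * (α - 1 / 2)) :
    ∀ β b : ℝ, 0 ≤ β → β ≤ 1 → 0 ≤ b → b ≤ 1 →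
      min (xiH PhH PlH PhL PlL α β b γ) (xiL PhH PlH PhL PlL α β b γ)
        ≤ (PhH - PhL) * (α - 1 / 2) / PhL := by
  intro β b hβ0 hβ1 hb0 hb1
  have hPlH : 0 < PlH := by nlinarith
  have hPhH : 0 < PhH := by linarith
  have hPlLpos : 0 < PlL := by linarith
  have hΔ : 0 < PhH - PhL := by linarith
  have hα : 0 < α - 1 / 2 := by linarith
  have hPhLlePlH : PhL ≤ PlH := by nlinarith
  rcases hbias with h | h
  · have h' : PlH * (1 - α - γ) ≤ PhH * PlL * (α - 1 / 2) := by
      rw [div_mul_eq_mul_div, le_div_iff₀ hPlH] at h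
      nlinarith
    refine le_trans (min_le_left _ _) ?_
    have hD : 0 < PhH * PlL * β + PlH * PlL * b + PlH := by
      have h1 := mul_nonneg (mul_nonneg hPhH.le hPlLpos.le) hβ0
      have h2 := mul_nonneg (mul_nonneg hPlH.le hPlLpos.le) hb0
      linarith
    rw [xiH, div_le_div_iff₀ hD hPhL]
    have hγα : 0 ≤ 1 - α - γ := by linarith
    have key : PhL * (α - 1 / 2 + (1 - α - γ) * β)
        ≤ (α - 1 / 2) * (PhH * PlL * β + PlH * PlL * b + PlH) := by
      nlinarith [mul_le_mul_of_nonneg_left h' hβ0,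
        mul_nonneg (mul_nonneg hb0 hPlH.le) (mul_nonneg hPlLpos.le hα.le),
        mul_nonneg (mul_nonneg hγα hβ0) (sub_nonneg.2 hPhLlePlH)]
    linarith [mul_le_mul_of_nonneg_left key hΔ.le]
  · have h' : PhL * γ ≤ PhH * PlL * (α - 1 / 2) := by
      rw [div_mul_eq_mul_div, le_div_iff₀ hPhL] at h
      nlinarith
    refine le_trans (min_le_right _ _) ?_
    have hD : 0 < PhH * PhL * β + PhH * PlL * b + PhL := by
      have h1 := mul_nonneg (mul_nonneg hPhH.le hPhL.le) hβ0
      have h2 := mul_nonneg (mul_nonneg hPhH.le hPlLpos.le) hb0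
      linarith
    rw [xiL, div_le_div_iff₀ hD hPhL]
    have key : PhL * (α - 1 / 2 + γ * b)
        ≤ (α - 1 / 2) * (PhH * PhL * β + PhH * PlL * b + PhL) := by
      nlinarith [mul_le_mul_of_nonneg_left h' hb0,
        mul_nonneg (mul_nonneg hβ0 hPhH.le) (mul_nonneg hPhL.le hα.le)]
    linarith [mul_le_mul_of_nonneg_left key hΔ.le]
end

section
/- Let α ∈ (1/2, 1), γ ∈ [0, 1 − α], and t ≥ 0. Define E_h(t) = (1 − α − γ)·P_lH − (α − 1/2)·P_hH·P_lL − (α − 1/2)·P_lH·P_lL·t. Then for all β₁, β₂ with 0 ≤ β₁ < β₂ ≤ 1 and t·β₂ ≤ 1: if E_h(t) > 0 then ξ_h(β₁, t·β₁, γ) < ξ_h(β₂, t·β₂, γ); if E_h(t) = 0 then ξ_h(β₁, t·β₁, γ) = ξ_h(β₂, t·β₂, γ); and if E_h(t) < 0 then ξ_h(β₁, t·β₁, γ) > ξ_h(β₂, t·β₂, γ). -/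
/-- the monotonicity of ξ_h along the line b = t·β is governed by the
    sign of E_h(t). -/
theorem stmt_7 (PhH PlH PhL PlL α γ t : ℝ)
    (hPhL : 0 < PhL) (hhh : PhL < PhH) (hHL : PhH ≤ PlL) (hPlL : PlL < 1)
    (hsH : PhH + PlH = 1) (hsL : PhL + PlL = 1)
    (hα₁ : 1 / 2 < α) (hα₂ : α < 1)
    (hγ₀ : 0 ≤ γ) (hγ₁ : γ ≤ 1 - α) (ht : 0 ≤ t) :
    ∀ β₁ β₂ : ℝ, 0 ≤ β₁ → β₁ < β₂ → β₂ ≤ 1 → t * β₂ ≤ 1 →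
      (0 < (1 - α - γ) * PlH - (α - 1 / 2) * PhH * PlL - (α - 1 / 2) * PlH * PlL * t →
        xiH PhH PlH PhL PlL α β₁ (t * β₁) γ < xiH PhH PlH PhL PlL α β₂ (t * β₂) γ) ∧
      ((1 - α - γ) * PlH - (α - 1 / 2) * PhH * PlL - (α - 1 / 2) * PlH * PlL * t = 0 →
        xiH PhH PlH PhL PlL α β₁ (t * β₁) γ = xiH PhH PlH PhL PlL α β₂ (t * β₂) γ) ∧
      ((1 - α - γ) * PlH - (α - 1 / 2) * PhH * PlL - (α - 1 / 2) * PlH * PlL * t < 0 →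
        xiH PhH PlH PhL PlL α β₂ (t * β₂) γ < xiH PhH PlH PhL PlL α β₁ (t * β₁) γ) := by
  intro β₁ β₂ hβ₁ h12 hβ₂ htβ
  have hPlH : 0 < PlH := by linarith
  have hPlLpos : 0 < PlL := by linarith
  have hPhH : 0 < PhH := by linarith
  have hd : ∀ β : ℝ, 0 ≤ β → 0 < PhH * PlL * β + PlH * PlL * (t * β) + PlH := by
    intro β hβ
    have h1 : 0 ≤ PhH * PlL * β := by positivity
    have h2 : 0 ≤ PlH * PlL * (t * β) := by positivity
    linarith
  have hd1 := hd β₁ hβ₁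
  have hd2 := hd β₂ (le_of_lt (lt_of_le_of_lt hβ₁ h12))
  set E := (1 - α - γ) * PlH - (α - 1 / 2) * PhH * PlL - (α - 1 / 2) * PlH * PlL * t with hE
  have key : xiH PhH PlH PhL PlL α β₂ (t * β₂) γ - xiH PhH PlH PhL PlL α β₁ (t * β₁) γ
      = ((PhH - PhL) * (β₂ - β₁) * E) /
        ((PhH * PlL * β₁ + PlH * PlL * (t * β₁) + PlH) *
         (PhH * PlL * β₂ + PlH * PlL * (t * β₂) + PlH)) := by
    unfold xiH
    rw [div_sub_div _ _ (ne_of_gt hd2) (ne_of_gt hd1), div_eq_div_iff (by positivity) (by positivity)]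
    ring
  have hΔ : 0 < PhH - PhL := by linarith
  have hβ : 0 < β₂ - β₁ := by linarith
  refine ⟨fun hEpos => ?_, fun hEzero => ?_, fun hEneg => ?_⟩
  · have : 0 < xiH PhH PlH PhL PlL α β₂ (t * β₂) γ - xiH PhH PlH PhL PlL α β₁ (t * β₁) γ := by
      rw [key]; positivity
    linarith
  · have : xiH PhH PlH PhL PlL α β₂ (t * β₂) γ - xiH PhH PlH PhL PlL α β₁ (t * β₁) γ = 0 := by
      rw [key, hEzero, mul_zero, zero_div]
    linarith
  · have : xiH PhH PlH PhL PlL α β₂ (t * β₂) γ - xiH PhH PlH PhL PlL α β₁ (t * β₁) γ < 0 := by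
      rw [key]
      apply div_neg_of_neg_of_pos
      · have : 0 < (PhH - PhL) * (β₂ - β₁) := by positivity
        nlinarith
      · positivity
    linarith
end

section
/- Let α ∈ (1/2, 1) with 1/(1 + P_lL) ≤ α ≤ 1/(2·P_lL), and let γ ∈ [0, 1 − α] satisfy 1 − α − γ > (P_hH·P_lL/P_lH)·(α − 1/2) and γ > (P_hH·P_lL/P_hL)·(α − 1/2). Then for all β ∈ [0, 1], min(ξ_h(β, 1, γ), ξ_l(β, 1, γ)) ≤ Δ·(α − 1/2)/P_hL. -/
set_option maxHeartbeats 1000000 in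
/-- case 1 - β_l^0 = 1, Segment 2 range: min(ξ_h, ξ_l) ≤ Δ(α-1/2)/P_hL. -/
theorem stmt_9 (PhH PlH PhL PlL α γ : ℝ)
    (hPhL : 0 < PhL) (hhh : PhL < PhH) (hHL : PhH ≤ PlL) (hPlL : PlL < 1)
    (hsH : PhH + PlH = 1) (hsL : PhL + PlL = 1)
    (hα₁ : 1 / 2 < α) (hα₂ : α < 1)
    (hα₃ : 1 / (1 + PlL) ≤ α) (hα₄ : α ≤ 1 / (2 * PlL))
    (hγ₀ : 0 ≤ γ) (hγ₁ : γ ≤ 1 - α)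
    (hγ₂ : (PhH * PlL / PlH) * (α - 1 / 2) < 1 - α - γ)
    (hγ₃ : (PhH * PlL / PhL) * (α - 1 / 2) < γ) :
    ∀ β : ℝ, 0 ≤ β → β ≤ 1 →
      min (xiH PhH PlH PhL PlL α β 1 γ) (xiL PhH PlH PhL PlL α β 1 γ)
        ≤ (PhH - PhL) * (α - 1 / 2) / PhL := by
  intro β hβ0 hβ1
  have e1 : PlH = 1 - PhH := by linarith
  have e2 : PlL = 1 - PhL := by linarith
  subst e1
  subst e2
  have hPhH : 0 < PhH := hPhL.trans hhh
  have hPlL0 : (0:ℝ) < 1 - PhL := by linarith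
  have hPlH : 0 < 1 - PhH := by linarith
  have hs : 0 < α - 1 / 2 := by linarith
  have hΔ : 0 < PhH - PhL := by linarith
  have hα₃' : 1 ≤ α * (1 + (1 - PhL)) := by
    rw [div_le_iff₀ (by linarith : (0:ℝ) < 1 + (1 - PhL))] at hα₃
    linarith
  have hγ₃' : PhH * (1 - PhL) * (α - 1 / 2) < γ * PhL := by
    rw [div_mul_eq_mul_div, div_lt_iff₀ hPhL] at hγ₃
    exact hγ₃
  have hDh : 0 < PhH * (1 - PhL) * β + (1 - PhH) * (1 - PhL) * 1 + (1 - PhH) := by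
    nlinarith [mul_nonneg (mul_nonneg hPhH.le hPlL0.le) hβ0, mul_pos hPlH hPlL0]
  have hDl : 0 < PhH * PhL * β + PhH * (1 - PhL) * 1 + PhL := by
    nlinarith [mul_nonneg (mul_nonneg hPhH.le hPhL.le) hβ0, mul_pos hPhH hPlL0]
  by_cases hc : PhL * γ - (α - 1 / 2) * PhH * (1 - PhL) ≤ (α - 1 / 2) * (PhH * PhL) * β
  · refine le_trans (min_le_right _ _) ?_
    unfold xiL
    rw [div_le_div_iff₀ hDl hPhL]
    nlinarith [mul_le_mul_of_nonneg_left hc hΔ.le]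
  · push_neg at hc
    refine le_trans (min_le_left _ _) ?_
    unfold xiH
    rw [div_le_div_iff₀ hDh hPhL]
    -- abbreviations: s = α - 1/2, u = PhL*γ - s*PhH*PlL, m = s*PhH*PhL,
    -- A = PhL*(1-α-γ) - s*PhH*PlL, E = 2s*PlL - PhL*(1-α), RHS = s*(PlH*PlL+PlH-PhL)
    have hu : 0 < PhL * γ - (α - 1 / 2) * PhH * (1 - PhL) := by nlinarith [hγ₃']
    have hE : 0 ≤ 2 * (α - 1 / 2) * (1 - PhL) - PhL * (1 - α) := by nlinarith [hα₃']
    have key : β * (PhL * (1 - α - γ) - (α - 1 / 2) * PhH * (1 - PhL)) ≤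
        (α - 1 / 2) * ((1 - PhH) * (1 - PhL) + (1 - PhH) - PhL) := by
      rcases le_or_gt (PhL * (1 - α - γ) - (α - 1 / 2) * PhH * (1 - PhL)) 0 with hA | hA
      · have hR : 0 ≤ (α - 1 / 2) * ((1 - PhH) * (1 - PhL) + (1 - PhH) - PhL) :=
          mul_nonneg hs.le (by nlinarith [mul_pos hPlH hPlL0])
        linarith [mul_nonneg hβ0 (neg_nonneg.mpr hA), hR]
      · rcases le_or_gt ((α - 1 / 2) * (PhH * PhL))
            (PhL * γ - (α - 1 / 2) * PhH * (1 - PhL)) with hm | hm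
        · -- u ≥ m :  RHS - A = E + (u - m)
          have hI : PhL * (1 - α - γ) - (α - 1 / 2) * PhH * (1 - PhL) ≤
              (α - 1 / 2) * ((1 - PhH) * (1 - PhL) + (1 - PhH) - PhL) := by
            linarith [hE, hm]
          nlinarith [mul_le_mul_of_nonneg_right hβ1 hA.le]
        · -- u < m : certificate  m*RHS - u*A = (m-u)*(2s*PlH*PlL - u - m) + u*E
          have hprod : PhH * PhL ≤ (1 - PhH) * (1 - PhL) := by nlinarith
          have hfac : 0 ≤ 2 * (α - 1 / 2) * ((1 - PhH) * (1 - PhL)) -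
              (PhL * γ - (α - 1 / 2) * PhH * (1 - PhL)) - (α - 1 / 2) * (PhH * PhL) := by
            nlinarith [mul_le_mul_of_nonneg_left hprod hs.le]
          have hcert : (PhL * γ - (α - 1 / 2) * PhH * (1 - PhL)) *
              (PhL * (1 - α - γ) - (α - 1 / 2) * PhH * (1 - PhL)) ≤
              ((α - 1 / 2) * (PhH * PhL)) *
              ((α - 1 / 2) * ((1 - PhH) * (1 - PhL) + (1 - PhH) - PhL)) := by
            linarith [mul_nonneg (sub_nonneg.2 hm.le) hfac, mul_nonneg hu.le hE]
          have hmpos : 0 < (α - 1 / 2) * (PhH * PhL) := mul_pos hs (mul_pos hPhH hPhL)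
          nlinarith [mul_le_mul_of_nonneg_right hc.le hA.le, hcert, hmpos]
    nlinarith [mul_le_mul_of_nonneg_left key hΔ.le]
end

section
/- Let α ∈ (1/2, 1) with α ≤ 1/(1 + P_lL), and let γ ∈ [0, 1 − α] satisfy 1 − α − γ > (P_hH·P_lL/P_lH)·(α − 1/2) and γ > (P_hH·P_lL/P_hL)·(α − 1/2). Then for all β ∈ [0, 1], min(ξ_h(β, 1, γ), ξ_l(β, 1, γ)) ≤ (1/2)·Δ·α. -/
set_option maxHeartbeats 1000000 in
/-- case 1 - β_l^0 = 1, Segment 4 range: min(ξ_h, ξ_l) ≤ (1/2)·Δ·α. -/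
theorem stmt_10 (PhH PlH PhL PlL α γ : ℝ)
    (hPhL : 0 < PhL) (hhh : PhL < PhH) (hHL : PhH ≤ PlL) (hPlL : PlL < 1)
    (hsH : PhH + PlH = 1) (hsL : PhL + PlL = 1)
    (hα₁ : 1 / 2 < α) (hα₂ : α < 1)
    (hα₃ : α ≤ 1 / (1 + PlL))
    (hγ₀ : 0 ≤ γ) (hγ₁ : γ ≤ 1 - α)
    (hγ₂ : (PhH * PlL / PlH) * (α - 1 / 2) < 1 - α - γ)
    (hγ₃ : (PhH * PlL / PhL) * (α - 1 / 2) < γ) :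
    ∀ β : ℝ, 0 ≤ β → β ≤ 1 →
      min (xiH PhH PlH PhL PlL α β 1 γ) (xiL PhH PlH PhL PlL α β 1 γ)
        ≤ (1 / 2) * (PhH - PhL) * α := by
  intro β hβ0 hβ1
  have hPhH : 0 < PhH := lt_trans hPhL hhh
  have hPlHpos : 0 < PlH := by linarith
  have hPlLpos : 0 < PlL := by linarith
  have hΔ : 0 < PhH - PhL := by linarith
  have hDh : 0 < PhH * PlL * β + PlH * PlL * 1 + PlH := by
    nlinarith [mul_nonneg (mul_nonneg hPhH.le hPlLpos.le) hβ0]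
  have hDl : 0 < PhH * PhL * β + PhH * PlL * 1 + PhL := by
    nlinarith [mul_nonneg (mul_nonneg hPhH.le hPhL.le) hβ0]
  set m := min (xiH PhH PlH PhL PlL α β 1 γ) (xiL PhH PlH PhL PlL α β 1 γ) with hm
  have h1 : m * (PhH * PlL * β + PlH * PlL * 1 + PlH)
      ≤ (PhH - PhL) * (α - 1 / 2 + (1 - α - γ) * β) := by
    have h := min_le_left (xiH PhH PlH PhL PlL α β 1 γ) (xiL PhH PlH PhL PlL α β 1 γ)
    rw [xiH] at h
    exact (le_div_iff₀ hDh).mp h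
  have h2 : m * (PhH * PhL * β + PhH * PlL * 1 + PhL)
      ≤ (PhH - PhL) * (α - 1 / 2 + γ * 1) := by
    have h := min_le_right (xiH PhH PlH PhL PlL α β 1 γ) (xiL PhH PlH PhL PlL α β 1 γ)
    rw [xiL] at h
    exact (le_div_iff₀ hDl).mp h
  have h3 : β * (m * (PhH * PhL * β + PhH * PlL * 1 + PhL))
      ≤ β * ((PhH - PhL) * (α - 1 / 2 + γ * 1)) :=
    mul_le_mul_of_nonneg_left h2 hβ0
  -- the weighted sum of numerators is bounded by the target times the weighted denominator
  have hα1PlL : α * (1 + PlL) ≤ 1 := by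
    have hpos : (0 : ℝ) < 1 + PlL := by linarith
    calc α * (1 + PlL) ≤ (1 / (1 + PlL)) * (1 + PlL) := by
          exact mul_le_mul_of_nonneg_right hα₃ hpos.le
      _ = 1 := by field_simp
  have hc : α * (2 * PhH + PhL) ≤ 1 := by nlinarith
  have key : (PhH - PhL) * (α - 1 / 2 + (1 - α - γ) * β)
      + β * ((PhH - PhL) * (α - 1 / 2 + γ * 1))
      ≤ (1 / 2) * (PhH - PhL) * α *
        ((PhH * PlL * β + PlH * PlL * 1 + PlH) + β * (PhH * PhL * β + PhH * PlL * 1 + PhL)) := by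
    have hPlH' : PlH = 1 - PhH := by linarith
    have hPlL' : PlL = 1 - PhL := by linarith
    have t1 : 0 ≤ (PhH - PhL) * (α / 2 * PhH * PhL) * (β - 1) ^ 2 := by positivity
    have t2 : 0 ≤ (PhH - PhL) * (1 / 2 - α * PhH - α * PhL / 2) * (1 - β) := by
      have : 0 ≤ 1 / 2 - α * PhH - α * PhL / 2 := by linarith
      have := mul_nonneg (mul_nonneg hΔ.le this) (by linarith : (0:ℝ) ≤ 1 - β)
      linarith
    subst hPlH' hPlL'
    have hid : (1 / 2) * (PhH - PhL) * α *
          ((PhH * (1 - PhL) * β + (1 - PhH) * (1 - PhL) * 1 + (1 - PhH))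
            + β * (PhH * PhL * β + PhH * (1 - PhL) * 1 + PhL))
        - ((PhH - PhL) * (α - 1 / 2 + (1 - α - γ) * β)
            + β * ((PhH - PhL) * (α - 1 / 2 + γ * 1)))
        = (PhH - PhL) * (α / 2 * PhH * PhL) * (β - 1) ^ 2
          + (PhH - PhL) * (1 / 2 - α * PhH - α * PhL / 2) * (1 - β) := by ring
    linarith [t1, t2]
  have h4 : m * ((PhH * PlL * β + PlH * PlL * 1 + PlH)
      + β * (PhH * PhL * β + PhH * PlL * 1 + PhL))
      ≤ (1 / 2) * (PhH - PhL) * α *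
        ((PhH * PlL * β + PlH * PlL * 1 + PlH) + β * (PhH * PhL * β + PhH * PlL * 1 + PhL)) := by
    have e : m * ((PhH * PlL * β + PlH * PlL * 1 + PlH)
        + β * (PhH * PhL * β + PhH * PlL * 1 + PhL))
        = m * (PhH * PlL * β + PlH * PlL * 1 + PlH)
          + β * (m * (PhH * PhL * β + PhH * PlL * 1 + PhL)) := by ring
    rw [e]
    linarith [h1, h3, key]
  have hDpos : 0 < (PhH * PlL * β + PlH * PlL * 1 + PlH)
      + β * (PhH * PhL * β + PhH * PlL * 1 + PhL) := by
    nlinarith [mul_nonneg hβ0 hDl.le]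
  exact le_of_mul_le_mul_right (by linarith [h4]) hDpos
end

section
/- Let α be real with 1/2 < α ≤ 1/(2·P_lL) and fix b ∈ [0, 1]. Define ξ̂(b) = Δ·(α − 1/2 + b/2) / ((P_lL·b + P_hL)·(P_lH·b + P_hH + 1)). Then for every γ ∈ [0, 1 − α], min(ξ_h(1, b, γ), ξ_l(1, b, γ)) ≤ ξ̂(b). -/
/-- case β_h^1 = 1: for every fixed b, min(ξ_h, ξ_l) ≤ ξ̂(b) for all
    feasible γ. -/
theorem stmt_11 (PhH PlH PhL PlL α b : ℝ)
    (hPhL : 0 < PhL) (hhh : PhL < PhH) (hHL : PhH ≤ PlL) (hPlL : PlL < 1)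
    (hsH : PhH + PlH = 1) (hsL : PhL + PlL = 1)
    (hα₁ : 1 / 2 < α) (hα₂ : α ≤ 1 / (2 * PlL))
    (hb₀ : 0 ≤ b) (hb₁ : b ≤ 1) :
    ∀ γ : ℝ, 0 ≤ γ → γ ≤ 1 - α →
      min (xiH PhH PlH PhL PlL α 1 b γ) (xiL PhH PlH PhL PlL α 1 b γ)
        ≤ (PhH - PhL) * (α - 1 / 2 + b / 2) /
            ((PlL * b + PhL) * (PlH * b + PhH + 1)) := by
  intro γ hγ0 hγ1
  have hPhH : 0 < PhH := hPhL.trans hhh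
  have hPlL0 : 0 < PlL := lt_of_lt_of_le hPhH hHL
  have hPlH : 0 < PlH := by nlinarith
  have hDh : 0 < PhH * PlL * 1 + PlH * PlL * b + PlH := by
    nlinarith [mul_pos hPhH hPlL0, mul_nonneg (mul_pos hPlH hPlL0).le hb₀]
  have hDl : 0 < PhH * PhL * 1 + PhH * PlL * b + PhL := by
    nlinarith [mul_pos hPhH hPhL, mul_nonneg (mul_pos hPhH hPlL0).le hb₀]
  have hE : 0 < (PlL * b + PhL) * (PlH * b + PhH + 1) := by
    have h1 : 0 < PlL * b + PhL := by nlinarith [mul_nonneg hPlL0.le hb₀]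
    have h2 : 0 < PlH * b + PhH + 1 := by nlinarith [mul_nonneg hPlH.le hb₀]
    exact mul_pos h1 h2
  have hEsub : (PlL * b + PhL) * (PlH * b + PhH + 1)
      = (PhH * PhL * 1 + PhH * PlL * b + PhL)
        + b * (PhH * PlL * 1 + PlH * PlL * b + PlH) := by
    linear_combination b * PlH * hsL - b * PlL * hsH
  rcases le_or_gt (xiH PhH PlH PhL PlL α 1 b γ)
      ((PhH - PhL) * (α - 1 / 2 + b / 2) /
        ((PlL * b + PhL) * (PlH * b + PhH + 1))) with h | h
  · exact le_trans (min_le_left _ _) h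
  · refine le_trans (min_le_right _ _) ?_
    unfold xiH at h
    unfold xiL
    rw [div_lt_div_iff₀ hE hDh] at h
    rw [div_le_div_iff₀ hDl hE]
    rw [hEsub] at h ⊢
    nlinarith [mul_nonneg hb₀ (sub_nonneg.mpr h.le)]
end
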